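/- arXiv:2202.00072 — 2 statements merged into one kernel-verified Lean document; each statement's English description precedes it below -/
import Mathlib

section
/- Let θ > 1 be a real number and let a : [0,∞) → ℝ be continuous with a(s) > 0 for s > 0, and suppose that the map s ↦ a(s)/s^{θ−1} is non-increasing on (0,∞). Define A(s) = ∫₀^s a(t) dt. Then the function s ↦ θ·A(s) − a(s)·s is non-decreasing on (0,∞); that is, for all 0 < s₁ ≤ s₂ one has θ·A(s₁) − a(s₁)·s₁ ≤ θ·A(s₂) − a(s₂)·s₂. -/
/-!
Put `c = a(s₂) / s₂^(θ-1)`. Monotonicity of `a(s)/s^(θ-1)` gives `a(t) ≥ c t^(θ-1)` on `[s₁, s₂]`,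
so `θ ∫_{s₁}^{s₂} a ≥ c (s₂^θ - s₁^θ) = a(s₂) s₂ - c s₁^θ`, and using `c ≤ a(s₁) / s₁^(θ-1)` once
more, `c s₁^θ ≤ a(s₁) s₁`.
-/

open intervalIntegral MeasureTheory Set

theorem ContinuousOn.intervalIntegrable_of_Ici {f : ℝ → ℝ} {c x y : ℝ} (hf : ContinuousOn f (Ici c))
    (hcx : c ≤ x) (hxy : x ≤ y) : IntervalIntegrable f volume x y :=
  (hf.mono (Icc_subset_Ici_self.trans (Ici_subset_Ici.mpr hcx))).intervalIntegrable_of_Icc hxy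

theorem mul_rpow_le_of_antitoneOn_div_rpow {f : ℝ → ℝ} {p s t : ℝ}
    (hanti : AntitoneOn (fun s => f s / s ^ p) (Ioi 0)) (ht : 0 < t) (hts : t ≤ s) :
    f s / s ^ p * t ^ p ≤ f t := by
  have hle : f s / s ^ p ≤ f t / t ^ p := hanti ht (ht.trans_le hts) hts
  calc f s / s ^ p * t ^ p ≤ f t / t ^ p * t ^ p := by gcongr
    _ = f t := div_mul_cancel₀ _ (Real.rpow_pos_of_pos ht p).ne'

theorem div_rpow_sub_one_mul_rpow (x : ℝ) {s : ℝ} (hs : 0 < s) (θ : ℝ) :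
    x / s ^ (θ - 1) * s ^ θ = x * s := by
  have hsθ : s ^ θ ≠ 0 := (Real.rpow_pos_of_pos hs θ).ne'
  rw [Real.rpow_sub_one hs.ne']
  field_simp

theorem mul_sub_mul_le_integral_of_antitoneOn_div_rpow {f : ℝ → ℝ} {θ s₁ s₂ : ℝ} (hθ : 0 < θ)
    (hf : IntervalIntegrable f volume s₁ s₂)
    (hanti : AntitoneOn (fun s => f s / s ^ (θ - 1)) (Ioi 0)) (hs₁ : 0 < s₁) (h12 : s₁ ≤ s₂) :
    f s₂ * s₂ - f s₁ * s₁ ≤ θ * ∫ t in s₁..s₂, f t := by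
  set c := f s₂ / s₂ ^ (θ - 1)
  have hpow : IntervalIntegrable (fun t : ℝ => c * t ^ (θ - 1)) volume s₁ s₂ :=
    (intervalIntegrable_rpow' (r := θ - 1) (by linarith)).const_mul c
  have hlower : c * ((s₂ ^ θ - s₁ ^ θ) / θ) ≤ ∫ t in s₁..s₂, f t := by
    have hint := integral_mono_on h12 hpow hf fun t ht =>
      mul_rpow_le_of_antitoneOn_div_rpow hanti (hs₁.trans_le ht.1) ht.2
    rwa [intervalIntegral.integral_const_mul, integral_rpow (.inl (by linarith)),
      sub_add_cancel] at hint
  have hc : c * s₁ ^ θ ≤ f s₁ * s₁ := by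
    rw [← div_rpow_sub_one_mul_rpow (f s₁) hs₁ θ]
    gcongr
    exact hanti hs₁ (hs₁.trans_le h12) h12
  have hc₂ : c * s₂ ^ θ = f s₂ * s₂ := div_rpow_sub_one_mul_rpow _ (hs₁.trans_le h12) θ
  calc f s₂ * s₂ - f s₁ * s₁ ≤ c * (s₂ ^ θ - s₁ ^ θ) := by linarith
    _ = θ * (c * ((s₂ ^ θ - s₁ ^ θ) / θ)) := by field_simp
    _ ≤ θ * ∫ t in s₁..s₂, f t := by gcongr

theorem kirchhoff_thetaA_sub_as_monotone_general (θ : ℝ) (hθ : 1 < θ) (a : ℝ → ℝ)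
    (ha_cont : ContinuousOn a (Set.Ici (0 : ℝ)))
    (ha_anti : AntitoneOn (fun s : ℝ => a s / s ^ (θ - 1)) (Set.Ioi (0 : ℝ))) :
    ∀ s₁ s₂ : ℝ, 0 < s₁ → s₁ ≤ s₂ →
      θ * (∫ t in (0:ℝ)..s₁, a t) - a s₁ * s₁ ≤
        θ * (∫ t in (0:ℝ)..s₂, a t) - a s₂ * s₂ := by
  intro s₁ s₂ hs₁ h12
  have hsplit : (∫ t in (0:ℝ)..s₂, a t) - (∫ t in (0:ℝ)..s₁, a t) = ∫ t in s₁..s₂, a t :=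
    integral_interval_sub_left (ha_cont.intervalIntegrable_of_Ici le_rfl (hs₁.le.trans h12))
      (ha_cont.intervalIntegrable_of_Ici le_rfl hs₁.le)
  have key := mul_sub_mul_le_integral_of_antitoneOn_div_rpow (by linarith)
    (ha_cont.intervalIntegrable_of_Ici hs₁.le h12) ha_anti hs₁ h12
  rw [← hsplit, mul_sub] at key
  linarith

/-- Under the hypotheses of condition (a₂), the map
`s ↦ θ·A(s) − a(s)·s` is non-decreasing on `(0,∞)`. -/
theorem kirchhoff_thetaA_sub_as_monotone (θ : ℝ) (hθ : 1 < θ) (a : ℝ → ℝ)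
    (ha_cont : ContinuousOn a (Set.Ici (0 : ℝ)))
    (ha_pos : ∀ s : ℝ, 0 < s → 0 < a s)
    (ha_anti : AntitoneOn (fun s : ℝ => a s / s ^ (θ - 1)) (Set.Ioi (0 : ℝ))) :
    ∀ s₁ s₂ : ℝ, 0 < s₁ → s₁ ≤ s₂ →
      θ * (∫ t in (0:ℝ)..s₁, a t) - a s₁ * s₁ ≤
        θ * (∫ t in (0:ℝ)..s₂, a t) - a s₂ * s₂ :=
  kirchhoff_thetaA_sub_as_monotone_general θ hθ a ha_cont ha_anti
end

section
/- Let λ > 0, α > 0, c₁, c₂, c₃ ≥ 0 with c₁ + c₂ + c₃ > 0, let N > 1, β > 1, p* > 1, χ > 0 be real numbers, and let φ : [0,∞) → ℝ be continuous such that, writing Φ(t) = ∫₀^t φ(s) ds, one has 0 < χ·Φ(t) ≤ φ(t)·t for all t > 0. Define f(t) = λ·c₁·t^{β−1}·e^{α t^{N/(N−1)}} + c₂·φ(t) + c₃·t^{p*−1} for t ≥ 0 and F(t) = ∫₀^t f(s) ds. Then, with ψ = min{χ, β, p*}, one has 0 < ψ·F(t) ≤ f(t)·t for every t > 0. -/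
/-!
Each of the three summands `g` of `f` satisfies its own Ambrosetti–Rabinowitz bound
`0 < θ ∫₀ᵗ g ≤ g(t) t`: with `θ = p*` the pure power `u^(p*-1)` gives equality, with `θ = β` the
factor `u^(β-1)` is integrated exactly once the increasing weight `e^(α u^(N/(N-1)))` is bounded by
its value at `t`, and with `θ = χ` it is the hypothesis on `φ`. Such bounds survive lowering `θ`
to `ψ` and taking nonnegative combinations with at least one nonzero coefficient.
-/

open intervalIntegral Real
open MeasureTheory (volume)

def AmbrosettiRabinowitzAt (θ : ℝ) (g : ℝ → ℝ) (t : ℝ) : Prop :=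
  0 < θ * ∫ u in (0:ℝ)..t, g u ∧ θ * ∫ u in (0:ℝ)..t, g u ≤ g t * t

namespace AmbrosettiRabinowitzAt

variable {θ ψ t : ℝ} {g : ℝ → ℝ}

-- A non-integrable `g` would have integral `0`.
theorem intervalIntegrable (h : AmbrosettiRabinowitzAt θ g t) :
    IntervalIntegrable g volume 0 t :=
  intervalIntegrable_of_integral_ne_zero (right_ne_zero_of_mul h.1.ne')

theorem mono (h : AmbrosettiRabinowitzAt θ g t) (hψ : 0 < ψ) (hψθ : ψ ≤ θ) :
    AmbrosettiRabinowitzAt ψ g t := by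
  have hθ : 0 < θ := hψ.trans_le hψθ
  have hint : 0 < ∫ u in (0:ℝ)..t, g u := pos_of_mul_pos_right h.1 hθ.le
  exact ⟨mul_pos hψ hint, (mul_le_mul_of_nonneg_right hψθ hint.le).trans h.2⟩

theorem finsetSum {ι : Type*} (s : Finset ι) {c : ι → ℝ} {g : ι → ℝ → ℝ}
    (hc : ∀ i ∈ s, 0 ≤ c i) (hc_pos : ∃ i ∈ s, 0 < c i)
    (hg : ∀ i ∈ s, AmbrosettiRabinowitzAt ψ (g i) t) :
    AmbrosettiRabinowitzAt ψ (fun u => ∑ i ∈ s, c i * g i u) t := by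
  have hsplit : ψ * ∫ u in (0:ℝ)..t, ∑ i ∈ s, c i * g i u
      = ∑ i ∈ s, c i * (ψ * ∫ u in (0:ℝ)..t, g i u) := by
    rw [integral_finsetSum fun i hi => (hg i hi).intervalIntegrable.const_mul (c i),
      Finset.mul_sum]
    simp only [intervalIntegral.integral_const_mul]
    exact Finset.sum_congr rfl fun i _ => by ring
  rw [AmbrosettiRabinowitzAt, hsplit, Finset.sum_mul]
  obtain ⟨j, hj, hcj⟩ := hc_pos
  refine ⟨Finset.sum_pos' (fun i hi => mul_nonneg (hc i hi) (hg i hi).1.le)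
    ⟨j, hj, mul_pos hcj (hg j hj).1⟩, Finset.sum_le_sum fun i hi => ?_⟩
  rw [mul_assoc]
  exact mul_le_mul_of_nonneg_left (hg i hi).2 (hc i hi)

end AmbrosettiRabinowitzAt

theorem integral_rpow_sub_one {p : ℝ} (hp : 0 < p) (t : ℝ) :
    ∫ u in (0:ℝ)..t, u ^ (p - 1) = t ^ p / p := by
  rw [integral_rpow (Or.inl (by linarith)), sub_add_cancel, zero_rpow hp.ne', sub_zero]

theorem mul_integral_rpow_sub_one {p t : ℝ} (hp : 0 < p) (ht : 0 < t) :
    p * ∫ u in (0:ℝ)..t, u ^ (p - 1) = t ^ (p - 1) * t := by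
  rw [integral_rpow_sub_one hp, ← rpow_add_one ht.ne', sub_add_cancel]
  field_simp

theorem ambrosettiRabinowitzAt_rpow_sub_one {p t : ℝ} (hp : 0 < p) (ht : 0 < t) :
    AmbrosettiRabinowitzAt p (fun u => u ^ (p - 1)) t := by
  refine ⟨?_, (mul_integral_rpow_sub_one hp ht).le⟩
  rw [mul_integral_rpow_sub_one hp ht]
  positivity

theorem ambrosettiRabinowitzAt_rpow_sub_one_mul {p t : ℝ} {w : ℝ → ℝ} (hp : 0 < p) (ht : 0 < t)
    (hw : MonotoneOn w (Set.Icc 0 t)) (hw_cont : ContinuousOn w (Set.Icc 0 t)) (hw₀ : 0 < w 0) :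
    AmbrosettiRabinowitzAt p (fun u => u ^ (p - 1) * w u) t := by
  have hw_pos : ∀ u ∈ Set.Icc 0 t, 0 < w u :=
    fun u hu => hw₀.trans_le (hw ⟨le_rfl, ht.le⟩ hu hu.1)
  have hint : IntervalIntegrable (fun u => u ^ (p - 1) * w u) volume 0 t :=
    (intervalIntegrable_rpow' (by linarith)).mul_continuousOn (by rwa [Set.uIcc_of_le ht.le])
  have hpos : 0 < ∫ u in (0:ℝ)..t, u ^ (p - 1) * w u :=
    intervalIntegral_pos_of_pos_on hint
      (fun u hu => mul_pos (rpow_pos_of_pos hu.1 _) (hw_pos u (Set.Ioo_subset_Icc_self hu))) ht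
  have hle : ∫ u in (0:ℝ)..t, u ^ (p - 1) * w u ≤ (∫ u in (0:ℝ)..t, u ^ (p - 1)) * w t := by
    rw [← integral_mul_const]
    refine integral_mono_on ht.le hint ((intervalIntegrable_rpow' (by linarith)).mul_const _)
      fun u hu => ?_
    exact mul_le_mul_of_nonneg_left (hw hu ⟨ht.le, le_rfl⟩ hu.2) (rpow_nonneg hu.1 _)
  refine ⟨mul_pos hp hpos, ?_⟩
  calc p * ∫ u in (0:ℝ)..t, u ^ (p - 1) * w u
      ≤ (p * ∫ u in (0:ℝ)..t, u ^ (p - 1)) * w t := by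
        rw [mul_assoc]
        exact mul_le_mul_of_nonneg_left hle hp.le
    _ = t ^ (p - 1) * w t * t := by rw [mul_integral_rpow_sub_one hp ht]; ring

theorem monotoneOn_exp_mul_rpow {α γ : ℝ} (hα : 0 ≤ α) (hγ : 0 ≤ γ) :
    MonotoneOn (fun u : ℝ => exp (α * u ^ γ)) (Set.Ici 0) :=
  fun _ hx _ _ hxy => exp_le_exp.2 (mul_le_mul_of_nonneg_left (rpow_le_rpow hx hxy hγ) hα)

theorem AR_condition_for_f_general (lam α c₁ c₂ c₃ N β pstar χ : ℝ) (φ : ℝ → ℝ)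
    (hlam : 0 < lam) (hα : 0 < α)
    (hc₁ : 0 ≤ c₁) (hc₂ : 0 ≤ c₂) (hc₃ : 0 ≤ c₃) (hcsum : 0 < c₁ + c₂ + c₃)
    (hN : 1 < N) (hβ : 1 < β) (hpstar : 1 < pstar) (hχ : 0 < χ)
    (hφ_AR : ∀ t : ℝ, 0 < t →
      0 < χ * (∫ s in (0:ℝ)..t, φ s) ∧ χ * (∫ s in (0:ℝ)..t, φ s) ≤ φ t * t) :
    ∀ t : ℝ, 0 < t →
      let f : ℝ → ℝ := fun u =>
        lam * c₁ * u ^ (β - 1) * Real.exp (α * u ^ (N / (N - 1))) +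
          c₂ * φ u + c₃ * u ^ (pstar - 1)
      let F : ℝ := ∫ s in (0:ℝ)..t, f s
      let ψ : ℝ := min χ (min β pstar)
      0 < ψ * F ∧ ψ * F ≤ f t * t := by
  intro t ht
  set γ := N / (N - 1)
  have hγ : 0 ≤ γ := div_nonneg (by linarith) (by linarith)
  have hψ : 0 < min χ (min β pstar) := lt_min hχ (lt_min (by linarith) (by linarith))
  have hexp : AmbrosettiRabinowitzAt β (fun u => u ^ (β - 1) * exp (α * u ^ γ)) t :=
    ambrosettiRabinowitzAt_rpow_sub_one_mul (by linarith) ht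
      ((monotoneOn_exp_mul_rpow hα.le hγ).mono Set.Icc_subset_Ici_self)
      (continuous_exp.comp (continuous_const.mul (continuous_rpow_const hγ))).continuousOn
      (exp_pos _)
  have hc_pos : 0 < lam * c₁ ∨ 0 < c₂ ∨ 0 < c₃ := by
    by_contra! h
    nlinarith
  have key := AmbrosettiRabinowitzAt.finsetSum (ψ := min χ (min β pstar)) Finset.univ
    (c := ![lam * c₁, c₂, c₃])
    (g := ![fun u => u ^ (β - 1) * exp (α * u ^ γ), φ, fun u => u ^ (pstar - 1)])
    (by simpa [Fin.forall_fin_succ] using ⟨mul_nonneg hlam.le hc₁, hc₂, hc₃⟩)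
    (by simpa [Fin.exists_fin_succ] using hc_pos)
    (by simpa [Fin.forall_fin_succ] using
      ⟨hexp.mono hψ (min_le_right _ _ |>.trans (min_le_left _ _)),
        AmbrosettiRabinowitzAt.mono (g := φ) (hφ_AR t ht) hψ (min_le_left _ _),
        (ambrosettiRabinowitzAt_rpow_sub_one (by linarith) ht).mono hψ
          (min_le_right _ _ |>.trans (min_le_right _ _))⟩)
  simpa [AmbrosettiRabinowitzAt, Fin.sum_univ_three, mul_assoc] using key

/-- Pointwise Ambrosetti–Rabinowitz condition
`0 < ψ·F(t) ≤ f(t)·t`, `ψ = min{χ, β, p*}`, for the nonlinearity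
`f(t) = λc₁ t^(β−1) e^(α t^(N/(N−1))) + c₂ φ(t) + c₃ t^(p*−1)`. -/
theorem AR_condition_for_f (lam α c₁ c₂ c₃ N β pstar χ : ℝ) (φ : ℝ → ℝ)
    (hlam : 0 < lam) (hα : 0 < α)
    (hc₁ : 0 ≤ c₁) (hc₂ : 0 ≤ c₂) (hc₃ : 0 ≤ c₃) (hcsum : 0 < c₁ + c₂ + c₃)
    (hN : 1 < N) (hβ : 1 < β) (hpstar : 1 < pstar) (hχ : 0 < χ)
    (hφ_cont : ContinuousOn φ (Set.Ici (0 : ℝ)))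
    (hφ_AR : ∀ t : ℝ, 0 < t →
      0 < χ * (∫ s in (0:ℝ)..t, φ s) ∧ χ * (∫ s in (0:ℝ)..t, φ s) ≤ φ t * t) :
    ∀ t : ℝ, 0 < t →
      let f : ℝ → ℝ := fun u =>
        lam * c₁ * u ^ (β - 1) * Real.exp (α * u ^ (N / (N - 1))) +
          c₂ * φ u + c₃ * u ^ (pstar - 1)
      let F : ℝ := ∫ s in (0:ℝ)..t, f s
      let ψ : ℝ := min χ (min β pstar)
      0 < ψ * F ∧ ψ * F ≤ f t * t :=
  AR_condition_for_f_general lam α c₁ c₂ c₃ N β pstar χ φ hlam hα hc₁ hc₂ hc₃ hcsum hN hβ hpstar hχ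
    hφ_AR
end
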